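/- arXiv:1307.4128 — 6 statements merged into one kernel-verified Lean document; each statement's English description precedes it below -/
import Mathlib

section
/- For real numbers a, b with b not a nonpositive integer, and any natural number n and real x with the involved denominators nonzero, the sum over k from 0 to n of [Γ(k+a)Γ(n−k+b) / (Γ(b)Γ(a)Γ(k+1)Γ(n−k+1))] · (∏_{j=1}^{k} (j−b)/(j+a−1)) · 1/(x−k+b) equals [x(x−1)⋯(x−n+1)] / [(x+b)(x+b−1)⋯(x+b−n)]. -/
open Real Finset

private lemma aux_gammaA (a : ℝ) (n : ℕ) (ha : ∀ j ∈ Finset.Icc 1 n, (j : ℝ) + a - 1 ≠ 0) :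
    ∀ k, k ≤ n →
      Real.Gamma ((k : ℝ) + a) = (∏ j ∈ Finset.Icc 1 k, ((j : ℝ) + a - 1)) * Real.Gamma a := by
  intro k
  induction k with
  | zero => simp
  | succ k ih =>
    intro hk
    have h1 : (k : ℝ) + a ≠ 0 := by
      have h := ha (k + 1) (Finset.mem_Icc.mpr ⟨Nat.le_add_left _ _, hk⟩)
      push_cast at h
      intro h0; apply h; linarith
    have h2 : ((k : ℝ) + 1) + a = ((k : ℝ) + a) + 1 := by ring
    push_cast
    rw [h2, Real.Gamma_add_one h1, ih (Nat.le_of_succ_le hk),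
      Finset.prod_Icc_succ_top (Nat.succ_le_succ (Nat.zero_le k))]
    push_cast
    ring

private lemma aux_gammaB (b : ℝ) (hb : ∀ m : ℕ, b ≠ -(m : ℝ)) (m : ℕ) :
    Real.Gamma ((m : ℝ) + b) = (∏ j ∈ Finset.range m, (b + (j : ℝ))) * Real.Gamma b := by
  induction m with
  | zero => simp
  | succ m ih =>
    have h1 : (m : ℝ) + b ≠ 0 := by
      intro h0; exact hb m (by linarith)
    have h2 : ((m : ℝ) + 1) + b = ((m : ℝ) + b) + 1 := by ring
    push_cast
    rw [h2, Real.Gamma_add_one h1, ih, Finset.prod_range_succ]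
    ring

private lemma aux_reflect (c : ℝ) (k : ℕ) :
    ∏ i ∈ Finset.range k, ((k : ℝ) - (i : ℝ) - c) = ∏ j ∈ Finset.Icc 1 k, ((j : ℝ) - c) := by
  refine Finset.prod_nbij' (fun i => k - i) (fun j => k - j) ?_ ?_ ?_ ?_ ?_
  · intro i hi; simp only [Finset.mem_range] at hi; simp only [Finset.mem_Icc]; omega
  · intro j hj; simp only [Finset.mem_Icc] at hj; simp only [Finset.mem_range]; omega
  · intro i hi; simp only [Finset.mem_range] at hi; show k - (k - i) = i; omega
  · intro j hj; simp only [Finset.mem_Icc] at hj; show k - (k - j) = j; omega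
  · intro i hi
    simp only [Finset.mem_range] at hi
    show (k : ℝ) - (i : ℝ) - c = ((k - i : ℕ) : ℝ) - c
    rw [Nat.cast_sub hi.le]

private lemma aux_shift (c : ℝ) (k n : ℕ) :
    ∏ i ∈ Finset.Ico k n, ((k : ℝ) - c - (i : ℝ))
      = ∏ m ∈ Finset.range (n - k), (-(c + (m : ℝ))) := by
  refine Finset.prod_nbij' (fun i => i - k) (fun m => k + m) ?_ ?_ ?_ ?_ ?_
  · intro i hi; simp only [Finset.mem_Ico] at hi; simp only [Finset.mem_range]; omega
  · intro m hm; simp only [Finset.mem_range] at hm; simp only [Finset.mem_Ico]; omega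
  · intro i hi; simp only [Finset.mem_Ico] at hi; show k + (i - k) = i; omega
  · intro m hm; show (k + m) - k = m; omega
  · intro i hi
    simp only [Finset.mem_Ico] at hi
    show (k : ℝ) - c - (i : ℝ) = -(c + ((i - k : ℕ) : ℝ))
    rw [Nat.cast_sub hi.1]
    ring

private lemma aux_neg (M : ℕ) (f : ℕ → ℝ) :
    (∏ m ∈ Finset.range M, (-(f m))) = (-1 : ℝ) ^ M * ∏ m ∈ Finset.range M, f m := by
  calc (∏ m ∈ Finset.range M, (-(f m)))
      = ∏ m ∈ Finset.range M, ((-1 : ℝ) * f m) :=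
        Finset.prod_congr rfl fun m _ => (neg_one_mul _).symm
    _ = (∏ _m ∈ Finset.range M, (-1 : ℝ)) * ∏ m ∈ Finset.range M, f m :=
        Finset.prod_mul_distrib
    _ = (-1 : ℝ) ^ M * ∏ m ∈ Finset.range M, f m := by
        rw [Finset.prod_const, Finset.card_range]

theorem stmt_0 (a b x : ℝ) (n : ℕ)
    (hb : ∀ m : ℕ, b ≠ -(m : ℝ))
    (ha : ∀ j ∈ Finset.Icc 1 n, (j : ℝ) + a - 1 ≠ 0)
    (hΓa : Real.Gamma a ≠ 0)
    (hx1 : ∀ k ∈ Finset.range (n + 1), x - (k : ℝ) + b ≠ 0)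
    (hx2 : ∀ i ∈ Finset.range (n + 1), x + b - (i : ℝ) ≠ 0) :
    ∑ k ∈ Finset.range (n + 1),
        (Real.Gamma ((k : ℝ) + a) * Real.Gamma ((n : ℝ) - (k : ℝ) + b)) /
          (Real.Gamma b * Real.Gamma a * Real.Gamma ((k : ℝ) + 1) *
            Real.Gamma ((n : ℝ) - (k : ℝ) + 1)) *
        (∏ j ∈ Finset.Icc 1 k, (((j : ℝ) - b) / ((j : ℝ) + a - 1))) *
        (1 / (x - (k : ℝ) + b))
      = (∏ i ∈ Finset.range n, (x - (i : ℝ))) /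
        (∏ i ∈ Finset.range (n + 1), (x + b - (i : ℝ))) := by
  classical
  have hΓb : Real.Gamma b ≠ 0 := Real.Gamma_ne_zero hb
  set v : ℕ → ℝ := fun k => (k : ℝ) - b with hvdef
  have hvinj : Set.InjOn v (Finset.range (n + 1) : Set ℕ) := by
    intro i _ j _ hij
    have h : (i : ℝ) = (j : ℝ) := by
      simp only [hvdef] at hij; linarith
    exact_mod_cast h
  set P : Polynomial ℝ := ∏ i ∈ Finset.range n, (Polynomial.X - Polynomial.C (i : ℝ)) with hPdef
  have hPdeg : P.degree < ((Finset.range (n + 1)).card : ℕ) := by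
    have h1 : P.degree = n := by
      rw [hPdef, Polynomial.degree_prod]
      simp only [Polynomial.degree_X_sub_C]
      rw [Finset.sum_const, Finset.card_range]
      simp
    rw [h1, Finset.card_range]
    exact_mod_cast Nat.lt_succ_self n
  have hP := Lagrange.eq_interpolate hvinj hPdeg
  have hx := congrArg (Polynomial.eval x) hP
  rw [Lagrange.interpolate_apply, Polynomial.eval_finset_sum] at hx
  have hnum : ∏ i ∈ Finset.range n, (x - (i : ℝ)) = Polynomial.eval x P := by
    rw [hPdef]; simp [Polynomial.eval_prod]
  have hden : ∏ i ∈ Finset.range (n + 1), (x + b - (i : ℝ))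
      = ∏ i ∈ Finset.range (n + 1), (x - v i) := by
    refine Finset.prod_congr rfl fun i _ => ?_
    simp only [hvdef]; ring
  rw [hnum, hden, hx, Finset.sum_div]
  refine Finset.sum_congr rfl fun k hk => ?_
  have hkn : k ≤ n := by
    simp only [Finset.mem_range] at hk; omega
  have hxk : x - (k : ℝ) + b ≠ 0 := hx1 k hk
  -- basis evaluation
  rw [Polynomial.eval_mul, Polynomial.eval_C]
  have hbasis : Polynomial.eval x (Lagrange.basis (Finset.range (n + 1)) v k)
      = (∏ j ∈ (Finset.range (n + 1)).erase k, (v k - v j))⁻¹ *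
        ∏ j ∈ (Finset.range (n + 1)).erase k, (x - v j) := by
    rw [Lagrange.basis, Polynomial.eval_prod, ← Finset.prod_inv_distrib,
      ← Finset.prod_mul_distrib]
    refine Finset.prod_congr rfl fun j _ => ?_
    simp [Lagrange.basisDivisor]
  -- split the erased set
  have herase : (Finset.range (n + 1)).erase k = Finset.range k ∪ Finset.Ico (k + 1) (n + 1) := by
    ext j
    simp only [Finset.mem_erase, Finset.mem_range, Finset.mem_union, Finset.mem_Ico]
    omega
  have hdisj : Disjoint (Finset.range k) (Finset.Ico (k + 1) (n + 1)) := by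
    rw [Finset.disjoint_left]
    intro j hj hj'
    simp only [Finset.mem_range] at hj
    simp only [Finset.mem_Ico] at hj'
    omega
  -- the residue denominator
  have hfact1 : (∏ j ∈ Finset.Icc 1 k, (j : ℝ)) = (k.factorial : ℝ) := by
    have h : ∏ j ∈ Finset.Icc 1 k, j = k.factorial := by
      rw [← Finset.Ico_add_one_right_eq_Icc, Finset.prod_Ico_id_eq_factorial]
    rw [← h, Nat.cast_prod]
  have hfact2 : (∏ m ∈ Finset.range (n - k), ((m : ℝ) + 1)) = ((n - k).factorial : ℝ) := by
    exact_mod_cast Finset.prod_range_add_one_eq_factorial (n - k)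
  have hR : ∏ j ∈ (Finset.range (n + 1)).erase k, (v k - v j)
      = (k.factorial : ℝ) * ((-1 : ℝ) ^ (n - k) * ((n - k).factorial : ℝ)) := by
    rw [herase, Finset.prod_union hdisj]
    have h1 : ∏ j ∈ Finset.range k, (v k - v j) = (k.factorial : ℝ) := by
      have h0 := aux_reflect 0 k
      simp only [sub_zero] at h0
      calc ∏ j ∈ Finset.range k, (v k - v j)
          = ∏ i ∈ Finset.range k, ((k : ℝ) - (i : ℝ) - 0) := by
            refine Finset.prod_congr rfl fun i _ => ?_
            simp only [hvdef]; ring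
        _ = (k.factorial : ℝ) := by rw [aux_reflect 0 k]; simpa [sub_zero] using hfact1
    have h2 : ∏ j ∈ Finset.Ico (k + 1) (n + 1), (v k - v j)
        = (-1 : ℝ) ^ (n - k) * ((n - k).factorial : ℝ) := by
      calc ∏ j ∈ Finset.Ico (k + 1) (n + 1), (v k - v j)
          = ∏ j ∈ Finset.Ico (k + 1) (n + 1), (((k + 1 : ℕ) : ℝ) - 1 - (j : ℝ)) := by
            refine Finset.prod_congr rfl fun j _ => ?_
            simp only [hvdef]; push_cast; ring
        _ = ∏ m ∈ Finset.range ((n + 1) - (k + 1)), (-(1 + (m : ℝ))) := aux_shift 1 (k + 1) (n + 1)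
        _ = (-1 : ℝ) ^ (n - k) * ((n - k).factorial : ℝ) := by
            have hnk : (n + 1) - (k + 1) = n - k := by omega
            rw [hnk, aux_neg]
            congr 1
            rw [← hfact2]
            exact Finset.prod_congr rfl fun m _ => by ring
    rw [h1, h2]
  -- P evaluated at the node
  have hPeval : Polynomial.eval (v k) P
      = (∏ j ∈ Finset.Icc 1 k, ((j : ℝ) - b)) *
        ((-1 : ℝ) ^ (n - k) * ∏ m ∈ Finset.range (n - k), (b + (m : ℝ))) := by
    rw [hPdef]
    simp only [Polynomial.eval_prod, Polynomial.eval_sub, Polynomial.eval_X, Polynomial.eval_C]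
    rw [← Finset.prod_range_mul_prod_Ico _ hkn]
    have h1 : ∏ i ∈ Finset.range k, (v k - (i : ℝ)) = ∏ j ∈ Finset.Icc 1 k, ((j : ℝ) - b) := by
      rw [← aux_reflect b k]
      refine Finset.prod_congr rfl fun i _ => ?_
      simp only [hvdef]; ring
    have h2 : ∏ i ∈ Finset.Ico k n, (v k - (i : ℝ))
        = (-1 : ℝ) ^ (n - k) * ∏ m ∈ Finset.range (n - k), (b + (m : ℝ)) := by
      calc ∏ i ∈ Finset.Ico k n, (v k - (i : ℝ))
          = ∏ i ∈ Finset.Ico k n, ((k : ℝ) - b - (i : ℝ)) := by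
            refine Finset.prod_congr rfl fun i _ => ?_
            simp only [hvdef]
        _ = ∏ m ∈ Finset.range (n - k), (-(b + (m : ℝ))) := aux_shift b k n
        _ = (-1 : ℝ) ^ (n - k) * ∏ m ∈ Finset.range (n - k), (b + (m : ℝ)) := aux_neg _ _
    rw [h1, h2]
  -- Gamma simplifications
  have hcast : (n : ℝ) - (k : ℝ) = ((n - k : ℕ) : ℝ) := by
    rw [Nat.cast_sub hkn]
  have hA : Real.Gamma ((k : ℝ) + a)
      = (∏ j ∈ Finset.Icc 1 k, ((j : ℝ) + a - 1)) * Real.Gamma a := aux_gammaA a n ha k hkn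
  have hAne : (∏ j ∈ Finset.Icc 1 k, ((j : ℝ) + a - 1)) ≠ 0 := by
    refine Finset.prod_ne_zero_iff.mpr fun j hj => ha j ?_
    simp only [Finset.mem_Icc] at hj ⊢
    omega
  have hB : Real.Gamma ((n : ℝ) - (k : ℝ) + b)
      = (∏ j ∈ Finset.range (n - k), (b + (j : ℝ))) * Real.Gamma b := by
    rw [hcast]; exact aux_gammaB b hb (n - k)
  have hΓk : Real.Gamma ((k : ℝ) + 1) = (k.factorial : ℝ) := Real.Gamma_nat_eq_factorial k
  have hΓnk : Real.Gamma ((n : ℝ) - (k : ℝ) + 1) = ((n - k).factorial : ℝ) := by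
    rw [hcast]; exact Real.Gamma_nat_eq_factorial (n - k)
  -- remaining algebra
  have hE : ∀ j ∈ (Finset.range (n + 1)).erase k, x - v j ≠ 0 := by
    intro j hj
    have hj' : j ∈ Finset.range (n + 1) := Finset.mem_of_mem_erase hj
    have := hx1 j hj'
    simp only [hvdef]
    intro h0; apply this; linarith
  have hEne : (∏ j ∈ (Finset.range (n + 1)).erase k, (x - v j)) ≠ 0 :=
    Finset.prod_ne_zero_iff.mpr hE
  have hDsplit : ∏ i ∈ Finset.range (n + 1), (x - v i)
      = (x - v k) * ∏ j ∈ (Finset.range (n + 1)).erase k, (x - v j) :=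
    (Finset.mul_prod_erase _ _ hk).symm
  have hvk : x - v k = x - (k : ℝ) + b := by
    simp only [hvdef]; ring
  rw [hbasis, hR, hPeval, hA, hB, hΓk, hΓnk, hDsplit, hvk, Finset.prod_div_distrib]
  have hkf : (k.factorial : ℝ) ≠ 0 := Nat.cast_ne_zero.mpr (Nat.factorial_ne_zero k)
  have hnkf : ((n - k).factorial : ℝ) ≠ 0 := Nat.cast_ne_zero.mpr (Nat.factorial_ne_zero (n - k))
  have hsgn : ((-1 : ℝ) ^ (n - k)) ≠ 0 := pow_ne_zero _ (by norm_num)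
  field_simp
end

section
/- For every real γ > −1, every positive integer N, and every complex number η, the equality Γ(N)/Γ(N+1+γ) · Σ_{n=0}^{N−1} [Γ(n+1+γ)/Γ(n+1)]·(1+η)^n = ∫_0^1 x^γ (1+ηx)^{N−1} dx holds. -/
open intervalIntegral

private lemma intInt (γ : ℝ) (hγ : -1 < γ) (η : ℂ) (k : ℕ) :
    IntervalIntegrable (fun x : ℝ => ((x ^ γ : ℝ) : ℂ) * (1 + η * (x : ℂ)) ^ k)
      MeasureTheory.volume 0 1 := by
  have h0 := intervalIntegral.intervalIntegrable_rpow' (a := 0) (b := 1) hγ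
  have h1 : IntervalIntegrable (fun x : ℝ => ((x ^ γ : ℝ) : ℂ)) MeasureTheory.volume 0 1 :=
    ⟨h0.1.ofReal, h0.2.ofReal⟩
  exact h1.mul_continuousOn (by fun_prop)

private lemma key (γ : ℝ) (hγ : -1 < γ) (η : ℂ) (N : ℕ) (hN : 1 ≤ N) :
    ((N : ℂ) + 1 + γ) * ∫ x in (0:ℝ)..1, ((x ^ γ : ℝ) : ℂ) * (1 + η * (x : ℂ)) ^ N
      = (N : ℂ) * (∫ x in (0:ℝ)..1, ((x ^ γ : ℝ) : ℂ) * (1 + η * (x : ℂ)) ^ (N - 1))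
        + (1 + η) ^ N := by
  set f' : ℝ → ℂ := fun x =>
    ((γ : ℂ) + 1 + N) * (((x ^ γ : ℝ) : ℂ) * (1 + η * (x : ℂ)) ^ N)
      - (N : ℂ) * (((x ^ γ : ℝ) : ℂ) * (1 + η * (x : ℂ)) ^ (N - 1)) with hf'
  have hderiv : ∀ x ∈ Set.Ioo (0:ℝ) 1,
      HasDerivAt (fun x : ℝ => ((x ^ (γ + 1) : ℝ) : ℂ) * (1 + η * (x : ℂ)) ^ N) (f' x) x := by
    intro x hx
    have hx0 : (0:ℝ) < x := hx.1
    have h1 : HasDerivAt (fun x : ℝ => ((x ^ (γ + 1) : ℝ) : ℂ)) (((γ + 1) * x ^ γ : ℝ) : ℂ) x := by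
      have := (Real.hasDerivAt_rpow_const (p := γ + 1) (Or.inl hx0.ne')).ofReal_comp
      simpa using this
    have hin : HasDerivAt (fun z : ℂ => 1 + η * z) η (x : ℂ) := by
      simpa using ((hasDerivAt_id ((x : ℝ) : ℂ)).const_mul η).const_add 1
    have h2 : HasDerivAt (fun x : ℝ => (1 + η * (x : ℂ)) ^ N)
        ((N : ℂ) * (1 + η * (x : ℂ)) ^ (N - 1) * η) x :=
      (hin.pow N).comp_ofReal
    have := h1.mul h2
    refine this.congr_deriv ?_
    have hxg : ((x ^ (γ + 1) : ℝ) : ℂ) = ((x ^ γ : ℝ) : ℂ) * (x : ℂ) := by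
      rw [Real.rpow_add_one hx0.ne']; push_cast; ring
    have hpow : (1 + η * (x : ℂ)) ^ N = (1 + η * (x : ℂ)) ^ (N - 1) * (1 + η * (x : ℂ)) := by
      conv_lhs => rw [← Nat.sub_add_cancel hN, pow_succ]
    rw [hf']
    push_cast
    rw [hxg, hpow]
    ring
  have hcont : ContinuousOn (fun x : ℝ => ((x ^ (γ + 1) : ℝ) : ℂ) * (1 + η * (x : ℂ)) ^ N)
      (Set.Icc (0:ℝ) 1) := by
    apply ContinuousOn.mul
    · exact (Complex.continuous_ofReal.comp
        (Real.continuous_rpow_const (by linarith))).continuousOn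
    · fun_prop
  have hint : IntervalIntegrable f' MeasureTheory.volume 0 1 := by
    rw [hf']
    exact ((intInt γ hγ η N).const_mul _).sub ((intInt γ hγ η (N-1)).const_mul _)
  have hFTC := intervalIntegral.integral_eq_sub_of_hasDerivAt_of_le (by norm_num) hcont hderiv hint
  have hend : ((((1:ℝ) ^ (γ + 1) : ℝ) : ℂ) * (1 + η * ((1:ℝ) : ℂ)) ^ N)
      - ((((0:ℝ) ^ (γ + 1) : ℝ) : ℂ) * (1 + η * ((0:ℝ) : ℂ)) ^ N) = (1 + η) ^ N := by
    rw [Real.one_rpow, Real.zero_rpow (by linarith)]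
    push_cast; ring
  rw [hend] at hFTC
  have hsplit : ∫ x in (0:ℝ)..1, f' x
      = ((γ : ℂ) + 1 + N) * (∫ x in (0:ℝ)..1, ((x ^ γ : ℝ) : ℂ) * (1 + η * (x : ℂ)) ^ N)
        - (N : ℂ) * ∫ x in (0:ℝ)..1, ((x ^ γ : ℝ) : ℂ) * (1 + η * (x : ℂ)) ^ (N - 1) := by
    rw [hf', intervalIntegral.integral_sub ((intInt γ hγ η N).const_mul _)
      ((intInt γ hγ η (N-1)).const_mul _), intervalIntegral.integral_const_mul,
      intervalIntegral.integral_const_mul]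
  rw [hsplit] at hFTC
  have : ((γ : ℂ) + 1 + N) = (N : ℂ) + 1 + γ := by ring
  rw [this] at hFTC
  linear_combination hFTC

theorem stmt_4 (γ : ℝ) (hγ : -1 < γ) (N : ℕ) (hN : 1 ≤ N) (η : ℂ) :
    ((Real.Gamma (N : ℝ) / Real.Gamma ((N : ℝ) + 1 + γ) : ℝ) : ℂ) *
        ∑ n ∈ Finset.range N,
          ((Real.Gamma ((n : ℝ) + 1 + γ) / Real.Gamma ((n : ℝ) + 1) : ℝ) : ℂ) * (1 + η) ^ n
      = ∫ x in (0 : ℝ)..1, ((x ^ γ : ℝ) : ℂ) * (1 + η * (x : ℂ)) ^ (N - 1) := by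
  induction N, hN using Nat.le_induction with
  | base =>
    simp only [Finset.sum_range_one, Nat.cast_zero, Nat.cast_one, pow_zero, mul_one,
      Nat.sub_self, zero_add]
    rw [show ((1:ℝ) + 1 + γ) = (1 + γ) + 1 by ring,
      Real.Gamma_add_one (by linarith), Real.Gamma_one]
    have hI : (∫ x in (0:ℝ)..1, ((x ^ γ : ℝ) : ℂ))
        = (((1:ℝ)/(γ+1) : ℝ) : ℂ) := by
      rw [intervalIntegral.integral_ofReal, integral_rpow (Or.inl hγ)]
      norm_num [Real.zero_rpow (show γ + 1 ≠ 0 by linarith)]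
    rw [hI]
    have hΓ : Real.Gamma (1 + γ) ≠ 0 :=
      (Real.Gamma_pos_of_pos (by linarith)).ne'
    rw [← Complex.ofReal_mul]
    congr 1
    have hΓp : 0 < Real.Gamma (1 + γ) := Real.Gamma_pos_of_pos (by linarith)
    rw [div_one, div_mul_eq_mul_div, one_mul,
      div_eq_div_iff (by nlinarith) (by linarith)]
    ring
  | succ N hN ih =>
    have hN1 : (1:ℝ) ≤ (N:ℝ) := by exact_mod_cast hN
    have hkey := key γ hγ η N hN
    rw [← ih] at hkey
    have hne : ((N : ℂ) + 1 + γ) ≠ 0 := by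
      have h : ((N : ℂ) + 1 + γ) = (((N : ℝ) + 1 + γ : ℝ) : ℂ) := by push_cast; ring
      rw [h]
      exact Complex.ofReal_ne_zero.mpr (by intro h; linarith)
    rw [show N + 1 - 1 = N from rfl]
    apply mul_left_cancel₀ hne
    rw [hkey, Finset.sum_range_succ]
    have hΓN : Real.Gamma (N : ℝ) ≠ 0 :=
      (Real.Gamma_pos_of_pos (by exact_mod_cast hN)).ne'
    have hΓN1 : Real.Gamma ((N : ℝ) + 1) ≠ 0 :=
      (Real.Gamma_pos_of_pos (by linarith)).ne'
    have hΓg : Real.Gamma ((N : ℝ) + 1 + γ) ≠ 0 :=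
      (Real.Gamma_pos_of_pos (by linarith)).ne'
    have hc1 : Real.Gamma ((N : ℝ) + 1) = N * Real.Gamma N :=
      Real.Gamma_add_one (by exact_mod_cast Nat.one_le_iff_ne_zero.mp hN)
    have hc2 : Real.Gamma ((N : ℝ) + 1 + 1 + γ) = ((N : ℝ) + 1 + γ) * Real.Gamma ((N : ℝ) + 1 + γ) := by
      rw [show (N : ℝ) + 1 + 1 + γ = ((N : ℝ) + 1 + γ) + 1 by ring,
        Real.Gamma_add_one (by intro h; linarith)]
    push_cast [hc2, hc1]
    have hNne : ((N : ℂ)) ≠ 0 := by exact_mod_cast Nat.one_le_iff_ne_zero.mp hN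
    have h1 : (Real.Gamma (N : ℝ) : ℂ) ≠ 0 := Complex.ofReal_ne_zero.mpr hΓN
    have h2 : (Real.Gamma ((N : ℝ) + 1 + γ) : ℂ) ≠ 0 := Complex.ofReal_ne_zero.mpr hΓg
    field_simp
end

section
/- For natural numbers M and real numbers x, y such that all Gamma function arguments appearing are not nonpositive integers, the alternating sum Σ_{m=0}^{M} (−1)^m · C(M,m) · Γ(m+x)/Γ(m+x+y) equals Γ(x)/Γ(y) · Γ(M+y)/Γ(M+x+y). -/
lemma aux5 (y : ℝ) (hy : ∀ j : ℕ, y ≠ -(j : ℝ)) :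
    ∀ M : ℕ, ∀ x : ℝ, (∀ j : ℕ, x ≠ -(j : ℝ)) → (∀ j : ℕ, x + y ≠ -(j : ℝ)) →
    ∑ m ∈ Finset.range (M + 1),
        (-1 : ℝ) ^ m * (M.choose m : ℝ) *
          (Real.Gamma ((m : ℝ) + x) / Real.Gamma ((m : ℝ) + x + y))
      = Real.Gamma x / Real.Gamma y *
          (Real.Gamma ((M : ℝ) + y) / Real.Gamma ((M : ℝ) + x + y)) := by
  have hGy : Real.Gamma y ≠ 0 := Real.Gamma_ne_zero hy
  intro M
  induction M with
  | zero =>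
      intro x hx hxy
      have hGxy : Real.Gamma (x + y) ≠ 0 := Real.Gamma_ne_zero hxy
      simp only [Finset.sum_range_one, Nat.cast_zero, zero_add, Nat.choose_self, Nat.cast_one]
      field_simp
  | succ M IH =>
      intro x hx hxy
      have hx1 : ∀ j : ℕ, x + 1 ≠ -(j : ℝ) := by
        intro j h
        exact hx (j + 1) (by push_cast; linarith)
      have hxy1 : ∀ j : ℕ, (x + 1) + y ≠ -(j : ℝ) := by
        intro j h
        exact hxy (j + 1) (by push_cast; linarith)
      have key : ∑ m ∈ Finset.range (M + 1 + 1),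
          (-1 : ℝ) ^ m * ((M+1).choose m : ℝ) *
            (Real.Gamma ((m : ℝ) + x) / Real.Gamma ((m : ℝ) + x + y))
        = (∑ m ∈ Finset.range (M + 1 + 1),
            (-1 : ℝ) ^ m * (M.choose m : ℝ) *
              (Real.Gamma ((m : ℝ) + x) / Real.Gamma ((m : ℝ) + x + y)))
          - ∑ k ∈ Finset.range (M + 1),
            (-1 : ℝ) ^ k * (M.choose k : ℝ) *
              (Real.Gamma ((k : ℝ) + (x+1)) / Real.Gamma ((k : ℝ) + (x+1) + y)) := by
        rw [Finset.sum_range_succ' (fun m => (-1 : ℝ) ^ m * ((M+1).choose m : ℝ) *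
            (Real.Gamma ((m : ℝ) + x) / Real.Gamma ((m : ℝ) + x + y))),
          Finset.sum_range_succ' (fun m => (-1 : ℝ) ^ m * (M.choose m : ℝ) *
            (Real.Gamma ((m : ℝ) + x) / Real.Gamma ((m : ℝ) + x + y)))]
        simp only [Nat.choose_zero_right]
        have hsum : ∑ k ∈ Finset.range (M + 1),
            (-1 : ℝ) ^ (k+1) * ((M+1).choose (k+1) : ℝ) *
              (Real.Gamma (((k+1 : ℕ) : ℝ) + x) / Real.Gamma (((k+1 : ℕ) : ℝ) + x + y))
          = ∑ k ∈ Finset.range (M + 1),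
            ((-1 : ℝ) ^ (k+1) * (M.choose (k+1) : ℝ) *
              (Real.Gamma (((k+1 : ℕ) : ℝ) + x) / Real.Gamma (((k+1 : ℕ) : ℝ) + x + y))
            + -((-1 : ℝ) ^ k * (M.choose k : ℝ) *
              (Real.Gamma ((k : ℝ) + (x+1)) / Real.Gamma ((k : ℝ) + (x+1) + y)))) := by
          apply Finset.sum_congr rfl
          intro k _
          have hc : (((M+1).choose (k+1) : ℕ) : ℝ) = (M.choose k : ℝ) + (M.choose (k+1) : ℝ) := by
            rw [Nat.choose_succ_succ]; push_cast; ring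
          have harg : ((k : ℝ) + (x + 1)) = (((k+1 : ℕ) : ℝ) + x) := by push_cast; ring
          have harg2 : ((k : ℝ) + (x + 1) + y) = (((k+1 : ℕ) : ℝ) + x + y) := by push_cast; ring
          rw [hc, harg]
          ring
        rw [hsum, Finset.sum_add_distrib, Finset.sum_neg_distrib]
        ring
      rw [key, Finset.sum_range_succ, Nat.choose_succ_self, Nat.cast_zero,
        IH x hx hxy, IH (x+1) hx1 hxy1]
      have hGMxy : Real.Gamma ((M : ℝ) + x + y) ≠ 0 := by
        apply Real.Gamma_ne_zero
        intro j h
        exact hxy (M + j) (by push_cast; linarith)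
      have hMxy0 : (M : ℝ) + x + y ≠ 0 := fun h => hxy M (by push_cast; linarith)
      have hMy0 : (M : ℝ) + y ≠ 0 := fun h => hy M (by push_cast at h ⊢; linarith)
      have hx0 : x ≠ 0 := fun h => hx 0 (by simpa using h)
      have g1 : Real.Gamma (x + 1) = x * Real.Gamma x := Real.Gamma_add_one hx0
      have g2 : Real.Gamma (((M+1 : ℕ) : ℝ) + y) = ((M : ℝ) + y) * Real.Gamma ((M : ℝ) + y) := by
        have h : ((M+1 : ℕ) : ℝ) + y = ((M : ℝ) + y) + 1 := by push_cast; ring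
        rw [h, Real.Gamma_add_one hMy0]
      have g3 : Real.Gamma (((M+1 : ℕ) : ℝ) + x + y)
          = ((M : ℝ) + x + y) * Real.Gamma ((M : ℝ) + x + y) := by
        have h : ((M+1 : ℕ) : ℝ) + x + y = ((M : ℝ) + x + y) + 1 := by push_cast; ring
        rw [h, Real.Gamma_add_one hMxy0]
      have g4 : Real.Gamma ((M : ℝ) + (x+1) + y)
          = ((M : ℝ) + x + y) * Real.Gamma ((M : ℝ) + x + y) := by
        have h : (M : ℝ) + (x+1) + y = ((M : ℝ) + x + y) + 1 := by ring
        rw [h, Real.Gamma_add_one hMxy0]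
      rw [g1, g2, g3, g4]
      field_simp
      ring

theorem stmt_5 (M : ℕ) (x y : ℝ)
    (hx : ∀ j : ℕ, x ≠ -(j : ℝ))
    (hy : ∀ j : ℕ, y ≠ -(j : ℝ))
    (hmx : ∀ m ∈ Finset.range (M + 1), ∀ j : ℕ, (m : ℝ) + x ≠ -(j : ℝ))
    (hmxy : ∀ m ∈ Finset.range (M + 1), ∀ j : ℕ, (m : ℝ) + x + y ≠ -(j : ℝ))
    (hMy : ∀ j : ℕ, (M : ℝ) + y ≠ -(j : ℝ))
    (hMxy : ∀ j : ℕ, (M : ℝ) + x + y ≠ -(j : ℝ)) :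
    ∑ m ∈ Finset.range (M + 1),
        (-1 : ℝ) ^ m * (M.choose m : ℝ) *
          (Real.Gamma ((m : ℝ) + x) / Real.Gamma ((m : ℝ) + x + y))
      = Real.Gamma x / Real.Gamma y *
          (Real.Gamma ((M : ℝ) + y) / Real.Gamma ((M : ℝ) + x + y)) := by
  apply aux5 y hy M x hx
  intro j
  have := hmxy 0 (Finset.mem_range.mpr (Nat.succ_pos M)) j
  simpa using this
end

section
/- If α, β are real with m+1+α+β = 0 for a natural number m ≥ 1 (and α, β not in {−1,−2,…}), then P_m^{α,β}(z) = [Γ(m+1+α)/(Γ(m+1)Γ(1+α))] (z−1)^m, where P_n^{α,β}(z) = Σ_{k=0}^{n} [Γ(k+1+α)Γ(n−k+1+β)] / [Γ(1+α)Γ(1+β)Γ(k+1)Γ(n−k+1)] z^k. -/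
/-- The polynomial `P_n^{α,β}(z) = ∑_{k=0}^n Γ(k+1+α)Γ(n−k+1+β)/(Γ(1+α)Γ(1+β)Γ(k+1)Γ(n−k+1)) zᵏ`. -/
noncomputable def P (n : ℕ) (α β : ℝ) (z : ℂ) : ℂ :=
  ∑ k ∈ Finset.range (n + 1),
    (((Real.Gamma ((k : ℝ) + 1 + α) * Real.Gamma ((n : ℝ) - (k : ℝ) + 1 + β)) /
        (Real.Gamma (1 + α) * Real.Gamma (1 + β) * Real.Gamma ((k : ℝ) + 1) *
          Real.Gamma ((n : ℝ) - (k : ℝ) + 1)) : ℝ) : ℂ) * z ^ k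

lemma gamma_shift (x : ℝ) (n : ℕ) (hx : ∀ j, j < n → x + j ≠ 0) :
    Real.Gamma (x + n) = Real.Gamma x * ∏ j ∈ Finset.range n, (x + j) := by
  induction n with
  | zero => simp
  | succ n ih =>
    have hcast : x + ((n + 1 : ℕ) : ℝ) = (x + n) + 1 := by push_cast; ring
    rw [hcast, Real.Gamma_add_one (hx n (by omega)),
      ih (fun j hj => hx j (by omega)), Finset.prod_range_succ]
    ring

theorem stmt_9 (α β : ℝ) (m : ℕ) (hm : 1 ≤ m)
    (hα : ∀ j : ℕ, α ≠ -((j : ℝ) + 1))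
    (hβ : ∀ j : ℕ, β ≠ -((j : ℝ) + 1))
    (h : (m : ℝ) + 1 + α + β = 0) (z : ℂ) :
    P m α β z
      = ((Real.Gamma ((m : ℝ) + 1 + α) /
          (Real.Gamma ((m : ℝ) + 1) * Real.Gamma (1 + α)) : ℝ) : ℂ) * (z - 1) ^ m := by
  have hβval : β = -((m : ℝ) + 1 + α) := by linarith
  have hΓα : Real.Gamma (1 + α) ≠ 0 := by
    apply Real.Gamma_ne_zero
    intro n hn
    exact hα n (by linarith)
  have hΓβ : Real.Gamma (1 + β) ≠ 0 := by
    apply Real.Gamma_ne_zero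
    intro n hn
    exact hβ n (by linarith)
  have key : ∀ k, k ≤ m →
      ((Real.Gamma ((k : ℝ) + 1 + α) * Real.Gamma ((m : ℝ) - (k : ℝ) + 1 + β)) /
        (Real.Gamma (1 + α) * Real.Gamma (1 + β) * Real.Gamma ((k : ℝ) + 1) *
          Real.Gamma ((m : ℝ) - (k : ℝ) + 1)))
      = Real.Gamma ((m : ℝ) + 1 + α) / (Real.Gamma ((m : ℝ) + 1) * Real.Gamma (1 + α))
          * ((-1) ^ (k + m) * (m.choose k : ℝ)) := by
    intro k hk
    set n := m - k with hn
    have hmk : (m : ℝ) = (k : ℝ) + (n : ℝ) := by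
      have : k + n = m := by omega
      rw [← this]; push_cast; ring
    -- Gamma factorial values
    have hΓk : Real.Gamma ((k : ℝ) + 1) = (k.factorial : ℝ) := by
      exact_mod_cast Real.Gamma_nat_eq_factorial k
    have hΓmk : Real.Gamma ((m : ℝ) - (k : ℝ) + 1) = (n.factorial : ℝ) := by
      have : (m : ℝ) - (k : ℝ) + 1 = (n : ℝ) + 1 := by rw [hmk]; ring
      rw [this]
      exact_mod_cast Real.Gamma_nat_eq_factorial n
    have hΓm : Real.Gamma ((m : ℝ) + 1) = (m.factorial : ℝ) := by
      exact_mod_cast Real.Gamma_nat_eq_factorial m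
    -- shift identity A
    have hA : Real.Gamma ((m : ℝ) + 1 + α)
        = Real.Gamma ((k : ℝ) + 1 + α) * ∏ j ∈ Finset.range n, ((k : ℝ) + 1 + α + j) := by
      have h1 : (m : ℝ) + 1 + α = ((k : ℝ) + 1 + α) + (n : ℝ) := by rw [hmk]; ring
      rw [h1]
      apply gamma_shift
      intro j hj hzero
      exact hα (k + j) (by push_cast; linarith)
    -- shift identity B
    have hB : Real.Gamma ((m : ℝ) - (k : ℝ) + 1 + β)
        = Real.Gamma (1 + β) * ∏ j ∈ Finset.range n, (1 + β + j) := by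
      have h1 : (m : ℝ) - (k : ℝ) + 1 + β = (1 + β) + (n : ℝ) := by rw [hmk]; ring
      rw [h1]
      apply gamma_shift
      intro j hj hzero
      have hj1 : (m - j - 1 : ℕ) + 1 = m - j := by omega
      apply hα (m - j - 1)
      have : ((m - j - 1 : ℕ) : ℝ) = (m : ℝ) - (j : ℝ) - 1 := by
        have : ((m - j - 1 : ℕ) : ℝ) + 1 + (j : ℝ) = m := by
          have h2 : (m - j - 1) + 1 + j = m := by omega
          exact_mod_cast congrArg (Nat.cast : ℕ → ℝ) h2
        linarith
      rw [this, hβval] at *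
      linarith
    -- sign reflection C
    have hC : ∏ j ∈ Finset.range n, (1 + β + (j : ℝ))
        = (-1) ^ n * ∏ j ∈ Finset.range n, ((k : ℝ) + 1 + α + j) := by
      rw [← Finset.prod_range_reflect (fun j => (1 + β + (j : ℝ)))]
      rw [show ((-1 : ℝ)) ^ n * ∏ j ∈ Finset.range n, ((k : ℝ) + 1 + α + j)
          = ∏ j ∈ Finset.range n, (-((k : ℝ) + 1 + α + j)) by
        have : ∀ j ∈ Finset.range n, -((k : ℝ) + 1 + α + j)
            = (-1) * ((k : ℝ) + 1 + α + j) := fun j _ => by ring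
        rw [Finset.prod_congr rfl this, Finset.prod_mul_distrib,
          Finset.prod_const, Finset.card_range]]
      apply Finset.prod_congr rfl
      intro j hj
      have hjn : j < n := Finset.mem_range.mp hj
      have : ((n - 1 - j : ℕ) : ℝ) = (n : ℝ) - 1 - (j : ℝ) := by
        have h2 : (n - 1 - j) + 1 + j = n := by omega
        have := congrArg (Nat.cast : ℕ → ℝ) h2
        push_cast at this
        linarith
      simp only [this, hβval, hmk]
      ring
    -- sign match
    have hsign : ((-1 : ℝ)) ^ (k + m) = (-1) ^ n := by
      have : k + m = n + 2 * k := by omega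
      rw [this, pow_add, pow_mul]
      simp
    -- factorial/choose identity
    have hfac : (m.factorial : ℝ) = (m.choose k : ℝ) * (k.factorial : ℝ) * (n.factorial : ℝ) := by
      exact_mod_cast (Nat.choose_mul_factorial_mul_factorial hk).symm
    have hkfac : (k.factorial : ℝ) ≠ 0 := Nat.cast_ne_zero.mpr k.factorial_ne_zero
    have hnfac : (n.factorial : ℝ) ≠ 0 := Nat.cast_ne_zero.mpr n.factorial_ne_zero
    rw [hA, hB, hC, hΓk, hΓmk, hΓm, hsign]
    field_simp
    rw [hfac]
    ring
  have hsum : P m α β z = ∑ k ∈ Finset.range (m + 1),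
      ((Real.Gamma ((m : ℝ) + 1 + α) /
        (Real.Gamma ((m : ℝ) + 1) * Real.Gamma (1 + α)) : ℝ) : ℂ)
        * ((-1) ^ (k + m) * (m.choose k : ℂ) * z ^ k) := by
    unfold P
    apply Finset.sum_congr rfl
    intro k hk
    have hkm : k ≤ m := by have := Finset.mem_range.mp hk; omega
    rw [key k hkm]
    push_cast
    ring
  rw [hsum, ← Finset.mul_sum, sub_pow]
  congr 1
  apply Finset.sum_congr rfl
  intro k hk
  ring
end

section
/- Define P_n^{α,β}(z) = Σ_{k=0}^{n} [Γ(k+1+α)Γ(n−k+1+β)] / [Γ(1+α)Γ(1+β)Γ(k+1)Γ(n−k+1)] z^k and the Jacobi polynomial J_n^{a,b}. Then P_n^{α,β}(z) = (1−z)^n · J_n^{−n−1−α, −n−1−β}((z+1)/(z−1)) for all z ≠ 1. -/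
/-- The Jacobi polynomial
`J_n^{a,b}(x) = (1/n!)·(Γ(a+n+1)/Γ(a+b+n+1))·∑_{m=0}^n C(n,m)·(Γ(a+b+n+m+1)/Γ(a+m+1))·((x−1)/2)^m`. -/
noncomputable def jacobiP (n : ℕ) (a b : ℝ) (x : ℂ) : ℂ :=
  (1 / (n.factorial : ℂ)) *
    ((Real.Gamma (a + (n : ℝ) + 1) / Real.Gamma (a + b + (n : ℝ) + 1) : ℝ) : ℂ) *
    ∑ m ∈ Finset.range (n + 1),
      (n.choose m : ℂ) *
        ((Real.Gamma (a + b + (n : ℝ) + (m : ℝ) + 1) / Real.Gamma (a + (m : ℝ) + 1) : ℝ) : ℂ) *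
        ((x - 1) / 2) ^ m

section Helpers
open Finset


lemma Gamma_shift (x : ℝ) (h : ∀ j : ℕ, x ≠ -(j : ℝ)) (m : ℕ) :
    Real.Gamma (x + m) = (∏ i ∈ range m, (x + i)) * Real.Gamma x := by
  induction m with
  | zero => simp
  | succ m ih =>
    have hx : x + m ≠ 0 := by
      intro hh; exact h m (by linarith)
    have harg : x + ((m : ℕ) + 1 : ℕ) = (x + m) + 1 := by push_cast; ring
    rw [harg, Real.Gamma_add_one hx, ih, prod_range_succ]; ring

lemma prod_flip (K : ℕ) (y : ℝ) :
    ∏ i ∈ range K, (y + i) = (-1 : ℝ) ^ K * ∏ i ∈ range K, (-y - K + 1 + i) := by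
  rw [← prod_range_reflect (fun i => -y - (K : ℝ) + 1 + i) K]
  rw [show ((-1 : ℝ) ^ K) = ∏ _i ∈ range K, (-1 : ℝ) by rw [prod_const, card_range], ← prod_mul_distrib]
  apply prod_congr rfl
  intro i hi
  rw [mem_range] at hi
  have : ((K - 1 - i : ℕ) : ℝ) = (K : ℝ) - 1 - i := by
    have h1 : i ≤ K - 1 := by omega
    have h2 : 1 ≤ K := by omega
    push_cast [Nat.cast_sub h1, Nat.cast_sub h2]
    ring
  rw [this]; ring


lemma key_s11 (β : ℝ) : ∀ (N : ℕ) (γ : ℝ),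
    (∑ i ∈ range (N + 1), ((-1 : ℝ) ^ i * (N.choose i) *
      (∏ t ∈ range i, (γ + 1 + t)) * ∏ s ∈ range (N - i), (γ + β + i + 2 + s)))
    = ∏ t ∈ range N, (β + 1 + t) := by
  intro N
  induction N with
  | zero => intro γ; simp
  | succ N ih =>
    intro γ
    have split : ∀ i ∈ range (N + 1 + 1),
        ((-1 : ℝ) ^ i * ((N + 1).choose i) *
          (∏ t ∈ range i, (γ + 1 + t)) * ∏ s ∈ range (N + 1 - i), (γ + β + i + 2 + s))
        = ((-1 : ℝ) ^ i * (N.choose i) *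
            (∏ t ∈ range i, (γ + 1 + t)) * ∏ s ∈ range (N + 1 - i), (γ + β + i + 2 + s))
          + ((-1 : ℝ) ^ i * ((if i = 0 then 0 else N.choose (i - 1) : ℕ)) *
            (∏ t ∈ range i, (γ + 1 + t)) * ∏ s ∈ range (N + 1 - i), (γ + β + i + 2 + s)) := by
      intro i _
      have : ((N + 1).choose i : ℝ) = (N.choose i : ℝ) + ((if i = 0 then 0 else N.choose (i - 1) : ℕ) : ℝ) := by
        rcases i with _ | i
        · simp
        · rw [Nat.choose_succ_succ']
          push_cast
          ring
      rw [this]; ring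
    rw [sum_congr rfl split, sum_add_distrib]
    -- First sum
    have e1 : (∑ i ∈ range (N + 1 + 1), ((-1 : ℝ) ^ i * (N.choose i) *
          (∏ t ∈ range i, (γ + 1 + t)) * ∏ s ∈ range (N + 1 - i), (γ + β + i + 2 + s)))
        = (γ + β + N + 2) * ∏ t ∈ range N, (β + 1 + t) := by
      rw [sum_range_succ]
      simp only [Nat.choose_succ_self, Nat.cast_zero, mul_zero, zero_mul, add_zero]
      have : ∀ i ∈ range (N + 1), ((-1 : ℝ) ^ i * (N.choose i) *
            (∏ t ∈ range i, (γ + 1 + t)) * ∏ s ∈ range (N + 1 - i), (γ + β + i + 2 + s))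
          = (γ + β + N + 2) * ((-1 : ℝ) ^ i * (N.choose i) *
            (∏ t ∈ range i, (γ + 1 + t)) * ∏ s ∈ range (N - i), (γ + β + i + 2 + s)) := by
        intro i hi
        rw [mem_range] at hi
        have h1 : N + 1 - i = (N - i) + 1 := by omega
        rw [h1, prod_range_succ]
        have h2 : ((N - i : ℕ) : ℝ) = (N : ℝ) - i := by
          rw [Nat.cast_sub (by omega)]
        rw [h2]; ring
      rw [sum_congr rfl this, ← mul_sum, ih γ]
    -- Second sum
    have e2 : (∑ i ∈ range (N + 1 + 1), ((-1 : ℝ) ^ i * ((if i = 0 then 0 else N.choose (i - 1) : ℕ)) *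
          (∏ t ∈ range i, (γ + 1 + t)) * ∏ s ∈ range (N + 1 - i), (γ + β + i + 2 + s)))
        = -((γ + 1) * ∏ t ∈ range N, (β + 1 + t)) := by
      rw [sum_range_succ']
      simp only [if_pos rfl, Nat.cast_zero, mul_zero, zero_mul, add_zero]
      have : ∀ i ∈ range (N + 1), ((-1 : ℝ) ^ (i + 1) * ((if i + 1 = 0 then 0 else N.choose (i + 1 - 1) : ℕ)) *
            (∏ t ∈ range (i + 1), (γ + 1 + t)) * ∏ s ∈ range (N + 1 - (i + 1)), (γ + β + (i + 1 : ℕ) + 2 + s))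
          = -((γ + 1) * ((-1 : ℝ) ^ i * (N.choose i) *
            (∏ t ∈ range i, ((γ + 1) + 1 + t)) * ∏ s ∈ range (N - i), ((γ + 1) + β + i + 2 + s))) := by
        intro i hi
        have h1 : N + 1 - (i + 1) = N - i := by omega
        have h2 : (∏ t ∈ range (i + 1), (γ + 1 + (t : ℝ))) = (γ + 1) * ∏ t ∈ range i, ((γ + 1) + 1 + t) := by
          rw [prod_range_succ']
          have : ∀ t ∈ range i, (γ + 1 + ((t + 1 : ℕ) : ℝ)) = ((γ + 1) + 1 + t) := by
            intro t _; push_cast; ring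
          rw [prod_congr rfl this]; ring
        have h3 : (∏ s ∈ range (N + 1 - (i + 1)), (γ + β + ((i + 1 : ℕ) : ℝ) + 2 + s))
            = ∏ s ∈ range (N - i), ((γ + 1) + β + i + 2 + s) := by
          rw [h1]
          apply prod_congr rfl
          intro s _; push_cast; ring
        rw [h2, h3]
        simp only [Nat.add_sub_cancel, if_neg (Nat.succ_ne_zero i)]
        ring
      rw [sum_congr rfl this]
      simp only [sum_neg_distrib, ← mul_sum, ih (γ + 1)]
      simp
    rw [e1, e2, prod_range_succ]
    ring


noncomputable def AA (α : ℝ) (k : ℕ) : ℝ := ∏ i ∈ range k, (α + 1 + i)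
noncomputable def EE (α β : ℝ) (n k : ℕ) : ℝ := ∏ s ∈ range (n - k), (α + β + k + 2 + s)
noncomputable def dd (α β : ℝ) (n k : ℕ) : ℝ :=
  AA α k * EE α β n k / (k.factorial * (n - k).factorial)
noncomputable def cc (α β : ℝ) (n k : ℕ) : ℝ :=
  AA α k * AA β (n - k) / (k.factorial * (n - k).factorial)

lemma coeff_id (α β : ℝ) (n j : ℕ) (hj : j ≤ n) :
    ∑ i ∈ range (n - j + 1), (-1 : ℝ) ^ i * ((j + i).choose j) * dd α β n (j + i)
      = cc α β n j := by
  set N := n - j with hN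
  set γ := α + (j : ℝ) with hγ
  have hterm : ∀ i ∈ range (N + 1),
      (-1 : ℝ) ^ i * ((j + i).choose j) * dd α β n (j + i)
        = (AA α j / (j.factorial * N.factorial)) *
            ((-1 : ℝ) ^ i * (N.choose i) *
              (∏ t ∈ range i, (γ + 1 + t)) * ∏ s ∈ range (N - i), (γ + β + i + 2 + s)) := by
    intro i hi
    rw [mem_range] at hi
    have hiN : i ≤ N := by omega
    have hA : AA α (j + i) = AA α j * ∏ t ∈ range i, (γ + 1 + t) := by
      rw [AA, prod_range_add]
      congr 1
      apply prod_congr rfl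
      intro t _
      push_cast [hγ]; ring
    have hE : EE α β n (j + i) = ∏ s ∈ range (N - i), (γ + β + i + 2 + s) := by
      rw [EE]
      have : n - (j + i) = N - i := by omega
      rw [this]
      apply prod_congr rfl
      intro s _
      push_cast [hγ]; ring
    have f1 : (((j + i).choose j : ℕ) : ℝ) * j.factorial * i.factorial = (j + i).factorial := by
      have := Nat.choose_mul_factorial_mul_factorial (Nat.le_add_right j i)
      rw [Nat.add_sub_cancel_left] at this
      exact_mod_cast this
    have f2 : ((N.choose i : ℕ) : ℝ) * i.factorial * (N - i).factorial = N.factorial := by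
      exact_mod_cast Nat.choose_mul_factorial_mul_factorial hiN
    have hn : n - (j + i) = N - i := by omega
    rw [dd, hA, hE, hn]
    have hj0 : (j.factorial : ℝ) ≠ 0 := by exact_mod_cast j.factorial_ne_zero
    have hi0 : (i.factorial : ℝ) ≠ 0 := by exact_mod_cast i.factorial_ne_zero
    have hji0 : ((j + i).factorial : ℝ) ≠ 0 := by exact_mod_cast (j + i).factorial_ne_zero
    have hNi0 : ((N - i).factorial : ℝ) ≠ 0 := by exact_mod_cast (N - i).factorial_ne_zero
    have hN0 : (N.factorial : ℝ) ≠ 0 := by exact_mod_cast N.factorial_ne_zero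
    field_simp
    rw [← f1, ← f2]
    ring
  rw [sum_congr rfl hterm, ← mul_sum, key_s11 β N γ, cc]
  have : AA β (n - j) = ∏ t ∈ range N, (β + 1 + t) := by rw [AA, hN]
  rw [this, hN]
  ring

lemma sum_eq (α β : ℝ) (n : ℕ) (z : ℂ) :
    ∑ k ∈ range (n + 1), ((dd α β n k : ℝ) : ℂ) * (z - 1) ^ k
      = ∑ k ∈ range (n + 1), ((cc α β n k : ℝ) : ℂ) * z ^ k := by
  have expand : ∀ k ∈ range (n + 1),
      ((dd α β n k : ℝ) : ℂ) * (z - 1) ^ k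
        = ∑ j ∈ range (k + 1),
            ((dd α β n k : ℝ) : ℂ) * (z ^ j * (-1 : ℂ) ^ (k - j) * (k.choose j)) := by
    intro k _
    rw [show z - 1 = z + (-1) by ring, add_pow, mul_sum]
  rw [sum_congr rfl expand]
  rw [sum_comm' (t' := range (n + 1)) (s' := fun j => Icc j n)
    (by intro x y; simp only [mem_range, mem_Icc]; omega)]
  apply sum_congr rfl
  intro j hj
  rw [mem_range] at hj
  have hjn : j ≤ n := by omega
  have : ∑ k ∈ Icc j n, ((dd α β n k : ℝ) : ℂ) * (z ^ j * (-1 : ℂ) ^ (k - j) * (k.choose j))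
      = (∑ i ∈ range (n - j + 1),
          (((-1 : ℝ) ^ i * ((j + i).choose j) * dd α β n (j + i) : ℝ) : ℂ)) * z ^ j := by
    rw [show Icc j n = Ico j (n + 1) by rfl, sum_Ico_eq_sum_range]
    have hc : n + 1 - j = n - j + 1 := by omega
    rw [hc, sum_mul]
    apply sum_congr rfl
    intro i _
    have : j + i - j = i := by omega
    rw [this]
    push_cast
    ring
  rw [this, ← Complex.ofReal_sum, coeff_id α β n j hjn]


lemma gg_eq (α β : ℝ) (n m : ℕ) (hm : m ≤ n)
    (ham : ∀ j : ℕ, (-(n : ℝ) - 1 - α) + (m : ℝ) + 1 ≠ -(j : ℝ))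
    (hab : ∀ j : ℕ,
      (-(n : ℝ) - 1 - α) + (-(n : ℝ) - 1 - β) + (n : ℝ) + 1 ≠ -(j : ℝ)) :
    (n.choose m : ℝ) *
        (Real.Gamma ((-(n : ℝ) - 1 - α) + (n : ℝ) + 1) /
          Real.Gamma ((-(n : ℝ) - 1 - α) + (-(n : ℝ) - 1 - β) + (n : ℝ) + 1)) *
        (Real.Gamma ((-(n : ℝ) - 1 - α) + (-(n : ℝ) - 1 - β) + (n : ℝ) + (m : ℝ) + 1) /
          Real.Gamma ((-(n : ℝ) - 1 - α) + (m : ℝ) + 1)) / (n.factorial : ℝ) * (-1 : ℝ) ^ n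
      = dd α β n (n - m) := by
  set a : ℝ := -(n : ℝ) - 1 - α with ha'
  set b : ℝ := -(n : ℝ) - 1 - β with hb'
  have hGm : Real.Gamma (a + (m : ℝ) + 1) ≠ 0 := Real.Gamma_ne_zero ham
  have hGab : Real.Gamma (a + b + (n : ℝ) + 1) ≠ 0 := Real.Gamma_ne_zero hab
  have h1 : Real.Gamma (a + (n : ℝ) + 1)
      = (∏ i ∈ range (n - m), (a + (m : ℝ) + 1 + i)) * Real.Gamma (a + (m : ℝ) + 1) := by
    have harg : a + (n : ℝ) + 1 = (a + (m : ℝ) + 1) + ((n - m : ℕ) : ℝ) := by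
      push_cast [Nat.cast_sub hm]; ring
    rw [harg, Gamma_shift _ ham]
  have h2 : Real.Gamma (a + b + (n : ℝ) + (m : ℝ) + 1)
      = (∏ i ∈ range m, (a + b + (n : ℝ) + 1 + i)) * Real.Gamma (a + b + (n : ℝ) + 1) := by
    have harg : a + b + (n : ℝ) + (m : ℝ) + 1 = (a + b + (n : ℝ) + 1) + (m : ℝ) := by ring
    rw [harg, Gamma_shift _ hab]
  have hp1 : (∏ i ∈ range (n - m), (a + (m : ℝ) + 1 + i))
      = (-1 : ℝ) ^ (n - m) * AA α (n - m) := by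
    rw [prod_flip, AA]
    congr 1
    apply prod_congr rfl
    intro i _
    push_cast [Nat.cast_sub hm, ha']
    ring
  have hp2 : (∏ i ∈ range m, (a + b + (n : ℝ) + 1 + i))
      = (-1 : ℝ) ^ m * EE α β n (n - m) := by
    rw [prod_flip, EE]
    have hc : n - (n - m) = m := by omega
    rw [hc]
    congr 1
    apply prod_congr rfl
    intro i _
    push_cast [Nat.cast_sub hm, ha', hb']
    ring
  have hfact : ((n.choose m : ℕ) : ℝ) * m.factorial * (n - m).factorial = n.factorial := by
    exact_mod_cast Nat.choose_mul_factorial_mul_factorial hm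
  have hsign : (-1 : ℝ) ^ (n - m) * (-1 : ℝ) ^ m * (-1 : ℝ) ^ n = 1 := by
    rw [← pow_add]
    have : n - m + m = n := by omega
    rw [this, ← pow_add]
    simp [pow_mul_comm, ← two_mul]
  have hdd : dd α β n (n - m)
      = AA α (n - m) * EE α β n (n - m) / ((n - m).factorial * m.factorial) := by
    rw [dd]
    have : n - (n - m) = m := by omega
    rw [this]
  rw [h1, h2, hp1, hp2, hdd]
  have hm0 : (m.factorial : ℝ) ≠ 0 := by exact_mod_cast m.factorial_ne_zero
  have hnm0 : ((n - m).factorial : ℝ) ≠ 0 := by exact_mod_cast (n - m).factorial_ne_zero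
  have hn0 : (n.factorial : ℝ) ≠ 0 := by exact_mod_cast n.factorial_ne_zero
  field_simp
  rw [← hfact]
  linear_combination (↑(n.choose m) * AA α (n - m) * EE α β n (n - m) *
    ↑(n - m).factorial * ↑m.factorial) * hsign


lemma lhs_eq (α β : ℝ) (n : ℕ) (z : ℂ)
    (hα : ∀ j : ℕ, α ≠ -((j : ℝ) + 1))
    (hβ : ∀ j : ℕ, β ≠ -((j : ℝ) + 1)) :
    P n α β z = ∑ k ∈ range (n + 1), ((cc α β n k : ℝ) : ℂ) * z ^ k := by
  rw [P]
  apply sum_congr rfl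
  intro k hk
  rw [mem_range] at hk
  have hkn : k ≤ n := by omega
  congr 1
  have hα' : ∀ j : ℕ, (1 + α) ≠ -(j : ℝ) := by
    intro j hcon; exact hα j (by linarith)
  have hβ' : ∀ j : ℕ, (1 + β) ≠ -(j : ℝ) := by
    intro j hcon; exact hβ j (by linarith)
  have h1 : Real.Gamma ((k : ℝ) + 1 + α) = AA α k * Real.Gamma (1 + α) := by
    rw [show (k : ℝ) + 1 + α = (1 + α) + (k : ℝ) by ring, Gamma_shift _ hα', AA]
    congr 1
    exact prod_congr rfl fun i _ => by ring
  have h2 : Real.Gamma ((n : ℝ) - (k : ℝ) + 1 + β) = AA β (n - k) * Real.Gamma (1 + β) := by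
    rw [show (n : ℝ) - (k : ℝ) + 1 + β = (1 + β) + ((n - k : ℕ) : ℝ) by
      push_cast [Nat.cast_sub hkn]; ring, Gamma_shift _ hβ', AA]
    congr 1
    exact prod_congr rfl fun i _ => by ring
  have h3 : Real.Gamma ((k : ℝ) + 1) = k.factorial := Real.Gamma_nat_eq_factorial k
  have h4 : Real.Gamma ((n : ℝ) - (k : ℝ) + 1) = (n - k).factorial := by
    rw [show (n : ℝ) - (k : ℝ) + 1 = ((n - k : ℕ) : ℝ) + 1 by push_cast [Nat.cast_sub hkn]; ring]
    exact Real.Gamma_nat_eq_factorial (n - k)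
  have hGα : Real.Gamma (1 + α) ≠ 0 := Real.Gamma_ne_zero hα'
  have hGβ : Real.Gamma (1 + β) ≠ 0 := Real.Gamma_ne_zero hβ'
  have hk0 : (k.factorial : ℝ) ≠ 0 := by exact_mod_cast k.factorial_ne_zero
  have hnk0 : ((n - k).factorial : ℝ) ≠ 0 := by exact_mod_cast (n - k).factorial_ne_zero
  have hre : Real.Gamma ((k : ℝ) + 1 + α) * Real.Gamma ((n : ℝ) - (k : ℝ) + 1 + β) /
      (Real.Gamma (1 + α) * Real.Gamma (1 + β) * Real.Gamma ((k : ℝ) + 1) *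
        Real.Gamma ((n : ℝ) - (k : ℝ) + 1)) = cc α β n k := by
    rw [h1, h2, h3, h4, cc]
    field_simp
  exact Complex.ofReal_inj.mpr hre

lemma rhs_eq (α β : ℝ) (n : ℕ) (z : ℂ) (hz : z ≠ 1)
    (ha : ∀ m ∈ Finset.range (n + 1), ∀ j : ℕ,
      (-(n : ℝ) - 1 - α) + (m : ℝ) + 1 ≠ -(j : ℝ))
    (hab : ∀ j : ℕ,
      (-(n : ℝ) - 1 - α) + (-(n : ℝ) - 1 - β) + (n : ℝ) + 1 ≠ -(j : ℝ)) :
    (1 - z) ^ n * jacobiP n (-(n : ℝ) - 1 - α) (-(n : ℝ) - 1 - β) ((z + 1) / (z - 1))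
      = ∑ k ∈ range (n + 1), ((dd α β n k : ℝ) : ℂ) * (z - 1) ^ k := by
  have hw : z - 1 ≠ 0 := sub_ne_zero.mpr hz
  have hx : ((z + 1) / (z - 1) - 1) / 2 = (z - 1)⁻¹ := by
    field_simp
    ring
  rw [jacobiP, hx, mul_comm, mul_sum, sum_mul]
  rw [← Finset.sum_range_reflect (fun k => ((dd α β n k : ℝ) : ℂ) * (z - 1) ^ k) (n + 1)]
  apply sum_congr rfl
  intro m hm
  rw [mem_range] at hm
  have hmn : m ≤ n := by omega
  simp only [Nat.add_sub_cancel]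
  have hsplit : (z - 1) ^ n = (z - 1) ^ (n - m) * (z - 1) ^ m := by
    rw [← pow_add]; congr 1; omega
  have hinv : ((z - 1)⁻¹) ^ m = ((z - 1) ^ m)⁻¹ := inv_pow _ _
  have hpow : (1 - z) ^ n * ((z - 1)⁻¹) ^ m = (-1 : ℂ) ^ n * (z - 1) ^ (n - m) := by
    rw [show (1 - z) = -(z - 1) by ring, neg_pow, hinv, hsplit]
    field_simp
  have hcoeff : (n.choose m : ℂ) *
        ((Real.Gamma ((-(n : ℝ) - 1 - α) + (-(n : ℝ) - 1 - β) + (n : ℝ) + (m : ℝ) + 1) /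
          Real.Gamma ((-(n : ℝ) - 1 - α) + (m : ℝ) + 1) : ℝ) : ℂ) *
        (1 / (n.factorial : ℂ) *
          ((Real.Gamma ((-(n : ℝ) - 1 - α) + (n : ℝ) + 1) /
            Real.Gamma ((-(n : ℝ) - 1 - α) + (-(n : ℝ) - 1 - β) + (n : ℝ) + 1) : ℝ) : ℂ)) *
        (-1 : ℂ) ^ n
      = ((dd α β n (n - m) : ℝ) : ℂ) := by
    rw [← gg_eq α β n m hmn (ha m (mem_range.mpr hm)) hab]
    push_cast
    have hn0 : (n.factorial : ℂ) ≠ 0 := by exact_mod_cast n.factorial_ne_zero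
    field_simp
  linear_combination ((n.choose m : ℂ) *
    ((Real.Gamma ((-(n : ℝ) - 1 - α) + (-(n : ℝ) - 1 - β) + (n : ℝ) + (m : ℝ) + 1) /
      Real.Gamma ((-(n : ℝ) - 1 - α) + (m : ℝ) + 1) : ℝ) : ℂ) *
    (1 / (n.factorial : ℂ) *
      ((Real.Gamma ((-(n : ℝ) - 1 - α) + (n : ℝ) + 1) /
        Real.Gamma ((-(n : ℝ) - 1 - α) + (-(n : ℝ) - 1 - β) + (n : ℝ) + 1) : ℝ) : ℂ))) * hpow
    + (z - 1) ^ (n - m) * hcoeff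

end Helpers

theorem stmt_11 (α β : ℝ) (n : ℕ)
    (hα : ∀ j : ℕ, α ≠ -((j : ℝ) + 1))
    (hβ : ∀ j : ℕ, β ≠ -((j : ℝ) + 1))
    (ha : ∀ m ∈ Finset.range (n + 1), ∀ j : ℕ,
      (-(n : ℝ) - 1 - α) + (m : ℝ) + 1 ≠ -(j : ℝ))
    (hab : ∀ j : ℕ,
      (-(n : ℝ) - 1 - α) + (-(n : ℝ) - 1 - β) + (n : ℝ) + 1 ≠ -(j : ℝ))
    (z : ℂ) (hz : z ≠ 1) :
    P n α β z
      = (1 - z) ^ n * jacobiP n (-(n : ℝ) - 1 - α) (-(n : ℝ) - 1 - β) ((z + 1) / (z - 1)) := by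
  rw [lhs_eq α β n z hα hβ, rhs_eq α β n z hz ha hab, sum_eq]
end

section
/- Let {a_k}_{k=0}^∞ be a non-increasing sequence of positive reals and, for each m, let {b_{k,m}}_{k=0}^{m} be a non-decreasing sequence of non-negative reals. Then for every complex z with |z| ≤ 1 and z ≠ 1, |Σ_{k=0}^{m} a_k b_{k,m} z^k| ≤ 4 a_0 b_{m,m} / |1−z|. -/
theorem stmt_16 (a : ℕ → ℝ) (b : ℕ → ℕ → ℝ)
    (ha_pos : ∀ k, 0 < a k) (ha_mono : ∀ k, a (k + 1) ≤ a k)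
    (hb_nonneg : ∀ m, ∀ k ≤ m, 0 ≤ b k m)
    (hb_mono : ∀ m, ∀ k, k < m → b k m ≤ b (k + 1) m)
    (m : ℕ) (z : ℂ) (hz1 : ‖z‖ ≤ 1) (hz : z ≠ 1) :
    ‖∑ k ∈ Finset.range (m + 1), ((a k : ℂ) * (b k m : ℂ)) * z ^ k‖
      ≤ 4 * a 0 * b m m / ‖1 - z‖ := by
  have hz0 : (0:ℝ) < ‖1 - z‖ := by
    rw [norm_pos_iff]
    intro h
    exact hz (sub_eq_zero.mp h).symm
  have ha_anti : Antitone a := antitone_nat_of_succ_le ha_mono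
  have hbm : ∀ k, k ≤ m → b k m ≤ b m m := by
    intro k hk
    have key : ∀ n, k + n ≤ m → b k m ≤ b (k + n) m := by
      intro n
      induction n with
      | zero => simp
      | succ n ih =>
        intro h
        exact le_trans (ih (by omega)) (hb_mono m (k + n) (by omega))
    have := key (m - k) (by omega)
    rwa [Nat.add_sub_cancel' hk] at this
  set C : ℝ := 2 / ‖1 - z‖ with hC
  have hG : ∀ n : ℕ, ‖∑ i ∈ Finset.range n, z ^ i‖ ≤ C := by
    intro n
    rw [geom_sum_eq hz, norm_div, show z - 1 = -(1 - z) by ring, norm_neg, hC]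
    gcongr
    calc ‖z ^ n - 1‖ ≤ ‖z ^ n‖ + ‖(1:ℂ)‖ := by
          simpa using norm_sub_le (z ^ n) 1
      _ ≤ 2 := by
          rw [norm_pow, norm_one]
          have : ‖z‖ ^ n ≤ 1 := pow_le_one₀ (norm_nonneg z) hz1
          linarith
  have hC0 : 0 ≤ C := by positivity
  have habel := Finset.sum_range_by_parts (fun k => ((a k : ℂ) * (b k m : ℂ)))
    (fun k => z ^ k) (m + 1)
  simp only [smul_eq_mul, Nat.add_sub_cancel] at habel
  rw [habel]
  have key : ‖(a m : ℂ) * (b m m : ℂ) * ∑ i ∈ Finset.range (m+1), z ^ i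
      - ∑ i ∈ Finset.range m, ((a (i+1) : ℂ) * (b (i+1) m : ℂ) - (a i : ℂ) * (b i m : ℂ))
          * ∑ j ∈ Finset.range (i+1), z ^ j‖
      ≤ a m * b m m * C
        + ∑ i ∈ Finset.range m, (a 0 * (b (i+1) m - b i m) + (a i - a (i+1)) * b m m) * C := by
    apply le_trans (norm_sub_le _ _)
    gcongr
    · rw [norm_mul, norm_mul, Complex.norm_real, Complex.norm_real, Real.norm_eq_abs, Real.norm_eq_abs,
        abs_of_pos (ha_pos m), abs_of_nonneg (hb_nonneg m m le_rfl)]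
      exact mul_le_mul_of_nonneg_left (hG _)
        (mul_nonneg (ha_pos m).le (hb_nonneg m m le_rfl))
    · refine le_trans (norm_sum_le _ _) (Finset.sum_le_sum ?_)
      intro i hi
      rw [Finset.mem_range] at hi
      rw [norm_mul]
      have hcast : ((a (i+1) : ℂ) * (b (i+1) m : ℂ) - (a i : ℂ) * (b i m : ℂ))
          = ((a (i+1) * b (i+1) m - a i * b i m : ℝ) : ℂ) := by push_cast; ring
      have h1 : ‖(a (i+1) : ℂ) * (b (i+1) m : ℂ) - (a i : ℂ) * (b i m : ℂ)‖
          ≤ a 0 * (b (i+1) m - b i m) + (a i - a (i+1)) * b m m := by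
        rw [hcast, Complex.norm_real, Real.norm_eq_abs, abs_le]
        have h2 : a (i+1) ≤ a i := ha_mono i
        have h3 : a (i+1) ≤ a 0 := ha_anti (Nat.zero_le _)
        have h4 : 0 < a (i+1) := ha_pos _
        have h5 : b i m ≤ b (i+1) m := hb_mono m i hi
        have h6 : 0 ≤ b i m := hb_nonneg m i (le_of_lt hi)
        have h7 : b i m ≤ b m m := hbm i (le_of_lt hi)
        have h8 : b (i+1) m ≤ b m m := hbm (i+1) hi
        constructor <;> nlinarith [mul_nonneg (sub_nonneg.mpr h3) (sub_nonneg.mpr h5),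
          mul_nonneg (sub_nonneg.mpr h2) h6,
          mul_nonneg (sub_nonneg.mpr h2) (sub_nonneg.mpr h7),
          mul_nonneg h4.le (sub_nonneg.mpr h5),
          mul_nonneg (ha_pos 0).le (sub_nonneg.mpr h5)]
      have hnn : 0 ≤ a 0 * (b (i+1) m - b i m) + (a i - a (i+1)) * b m m :=
        le_trans (norm_nonneg _) h1
      exact mul_le_mul h1 (hG _) (norm_nonneg _) hnn
  refine le_trans key ?_
  rw [← Finset.sum_mul]
  have hsum : ∑ i ∈ Finset.range m, (a 0 * (b (i+1) m - b i m) + (a i - a (i+1)) * b m m)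
      = a 0 * (b m m - b 0 m) + (a 0 - a m) * b m m := by
    rw [Finset.sum_add_distrib, ← Finset.mul_sum, Finset.sum_range_sub (fun k => b k m),
      ← Finset.sum_mul, Finset.sum_range_sub' a]
  rw [hsum]
  have hb0 : 0 ≤ b 0 m := hb_nonneg m 0 (Nat.zero_le _)
  have ham : 0 < a m := ha_pos m
  have ha0m : a m ≤ a 0 := ha_anti (Nat.zero_le m)
  have hbm0 : 0 ≤ b m m := hb_nonneg m m le_rfl
  have : a m * b m m * C + (a 0 * (b m m - b 0 m) + (a 0 - a m) * b m m) * C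
      ≤ 2 * a 0 * b m m * C := by
    have h0 : 0 ≤ a 0 * b 0 m := mul_nonneg (ha_pos 0).le hb0
    nlinarith [mul_le_mul_of_nonneg_right h0 hC0]
  refine le_trans this (le_of_eq ?_)
  rw [hC]
  field_simp
  ring
end
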